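/- Let X be a uniformly locally finite CAT(0) cube complex with no extremal vertices (no vertex whose link is a cone). Then the map sending a vertex v to the set W_v of hyperplanes adjacent to v is a bijection between the vertex set of X and the set of maximal cliques of the contact graph C(X). -/

import Mathlib

/-!
In the median graph `G` (the 1-skeleton of `X`) every edge `xy` splits the vertices into the
halfspace `{v | d(v, x) < d(v, y)}` and its complement, and both are convex; the proof takes a
shortest geodesic leaving the halfspace and reduces it to a `K₂,₃`, which uniqueness of medians
forbids. Consequently the Djoković–Winkler class of `xy` is the set of edges crossing this cut,
and its carrier is convex as well.

Convex sets of a median graph have the Helly property (the median of three pairwise witnesses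
lies in all three sets), so every finite part of a contact clique lies in some `W_v`, a set with
at most as many elements as `v` has neighbours. By uniform local finiteness the clique is then
finite and lies in a single `W_v`. Maximal cliques are therefore exactly the sets `W_v` once
`W_v ⊆ W_w` forces `v = w`. If `v ≠ w`, the hyperplane dual to the first edge of a geodesic from
`v` to `w` is transverse to every other hyperplane in `W_v ⊆ W_w`, whose carrier is convex and so
contains that edge; then the link of `v` is a cone.
-/

open SimpleGraph

variable {V : Type*}

/-- A median graph: combinatorial model of (the 1-skeleton of) a CAT(0) cube complex. -/
def IsMedianGraph (G : SimpleGraph V) : Prop :=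
  G.Connected ∧ ∀ x y z : V, ∃! m : V,
    G.dist x m + G.dist m y = G.dist x y ∧
    G.dist x m + G.dist m z = G.dist x z ∧
    G.dist y m + G.dist m z = G.dist y z

/-- Djoković–Winkler relation on oriented edges of a median graph; hyperplanes are its classes. -/
def Theta (G : SimpleGraph V) (e f : V × V) : Prop :=
  G.dist e.1 f.1 + G.dist e.2 f.2 ≠ G.dist e.1 f.2 + G.dist e.2 f.1

/-- A hyperplane, identified with the set of (oriented) edges crossing it. -/
def IsHyperplane (G : SimpleGraph V) (h : Set (V × V)) : Prop :=
  ∃ e : V × V, G.Adj e.1 e.2 ∧ h = {f | G.Adj f.1 f.2 ∧ Theta G e f}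

/-- The hyperplane `h` is adjacent to the vertex `v` (i.e. `v` lies in the carrier of `h`). -/
def AdjTo (G : SimpleGraph V) (h : Set (V × V)) (v : V) : Prop :=
  ∃ e ∈ h, e.1 = v ∨ e.2 = v

/-- `Wv G v`: the set of hyperplanes adjacent to `v`. -/
def Wv (G : SimpleGraph V) (v : V) : Set (Set (V × V)) :=
  {h | IsHyperplane G h ∧ AdjTo G h v}

/-- Two hyperplanes are in contact if their carriers share a vertex. -/
def Contact (G : SimpleGraph V) (h h' : Set (V × V)) : Prop :=
  ∃ v : V, AdjTo G h v ∧ AdjTo G h' v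

/-- Two hyperplanes are transverse if they cross a common square. -/
def Transverse (G : SimpleGraph V) (h h' : Set (V × V)) : Prop :=
  ∃ a b c d : V, (a, b) ∈ h ∧ (c, d) ∈ h ∧ (a, c) ∈ h' ∧ (b, d) ∈ h' ∧
    G.Adj a b ∧ G.Adj c d ∧ G.Adj a c ∧ G.Adj b d

/-- A clique in the contact graph: a set of hyperplanes whose carriers pairwise intersect. -/
def IsContactClique (G : SimpleGraph V) (C : Set (Set (V × V))) : Prop :=
  (∀ h ∈ C, IsHyperplane G h) ∧ ∀ h ∈ C, ∀ h' ∈ C, h ≠ h' → Contact G h h'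

/-- A maximal clique in the contact graph. -/
def IsMaxContactClique (G : SimpleGraph V) (C : Set (Set (V × V))) : Prop :=
  IsContactClique G C ∧ ∀ C', IsContactClique G C' → C ⊆ C' → C' = C

/-- The link of `v` is a cone, i.e. `v` is an extremal vertex. -/
def LinkIsCone (G : SimpleGraph V) (v : V) : Prop :=
  ∃ h ∈ Wv G v, ∀ h' ∈ Wv G v, h' ≠ h → Transverse G h h'

/-- Uniform local finiteness. -/
def UnifLocFinite (G : SimpleGraph V) : Prop :=
  ∃ N : ℕ, ∀ v : V, (G.neighborSet v).Finite ∧ (G.neighborSet v).ncard ≤ N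

abbrev Hyp (G : SimpleGraph V) := {h : Set (V × V) // IsHyperplane G h}

/-- The contact graph `𝒞(X)`. -/
def contactGraph (G : SimpleGraph V) : SimpleGraph (Hyp G) where
  Adj h h' := h ≠ h' ∧ Contact G h.1 h'.1
  symm := ⟨by
    rintro h h' ⟨hne, v, hv, hv'⟩
    exact ⟨hne.symm, v, hv', hv⟩⟩
  loopless := ⟨by rintro h ⟨hne, -⟩; exact hne rfl⟩

/-- `Ical G w` = I(w): the hyperplanes whose carrier contains the carrier of `w`,
i.e. the intersection of the sets `Wv G v` over all vertices `v` adjacent to `w`. -/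
def Ical (G : SimpleGraph V) (w : Set (V × V)) : Set (Set (V × V)) :=
  {u | IsHyperplane G u ∧ ∀ v : V, AdjTo G w v → AdjTo G u v}

/-- `Ical0 G w` = I⁰(w): the hyperplanes with the same carrier as `w`. -/
def Ical0 (G : SimpleGraph V) (w : Set (V × V)) : Set (Set (V × V)) :=
  {u | u ∈ Ical G w ∧ w ∈ Ical G u}

/-- The action of a cubical automorphism on sets of edges (e.g. hyperplanes). -/
def hmap (G : SimpleGraph V) (φ : G ≃g G) (h : Set (V × V)) : Set (V × V) :=
  (fun e : V × V => (φ e.1, φ e.2)) '' h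

/-- `π` is the vertex permutation induced by the contact-graph automorphism `ψ` via the
correspondence between vertices and maximal cliques (`ρ(ψ) = π`). -/
def InducesPerm (G : SimpleGraph V) (ψ : contactGraph G ≃g contactGraph G)
    (π : Equiv.Perm V) : Prop :=
  ∀ (v : V) (h : Hyp G), h.1 ∈ Wv G v ↔ (ψ h).1 ∈ Wv G (π v)

/-- The hyperplane `u` is adjacent, inside the cube complex structure of a hyperplane `w`,
to the vertex of `w` given by the edge `e ∈ w`: `u` crosses a square containing `e`. -/
def HypAdjEdge (G : SimpleGraph V) (u : Set (V × V)) (e : V × V) : Prop :=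
  ∃ c d : V, (e.1, c) ∈ u ∧ (e.2, d) ∈ u ∧ G.Adj c d

/-- The link, in the cube complex structure of hyperplane `w`, of the vertex given by
`e ∈ w` is a cone (i.e. this vertex of `w` is extremal). -/
def HypLinkCone (G : SimpleGraph V) (w : Set (V × V)) (e : V × V) : Prop :=
  ∃ u, IsHyperplane G u ∧ u ≠ w ∧ HypAdjEdge G u e ∧
    ∀ u', IsHyperplane G u' → u' ≠ w → HypAdjEdge G u' e → u' ≠ u → Transverse G u u'

/-- No hyperplane of `X` has an extremal vertex. -/
def NoHypExtremalVertex (G : SimpleGraph V) : Prop :=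
  ∀ w, IsHyperplane G w → ∀ e ∈ w, ¬ HypLinkCone G w e

def halfspace (G : SimpleGraph V) (x y : V) : Set V :=
  {v | G.dist v x < G.dist v y}

def IsIntervalConvex (G : SimpleGraph V) (S : Set V) : Prop :=
  ∀ ⦃u w z⦄, u ∈ S → w ∈ S → G.dist u z + G.dist z w = G.dist u w → z ∈ S

def IsAdjConvexBelow (G : SimpleGraph V) (S : Set V) (n : ℕ) : Prop :=
  ∀ ⦃u w z⦄, G.dist u w < n → u ∈ S → w ∈ S → G.Adj u z →
    G.dist u z + G.dist z w = G.dist u w → z ∈ S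

def edgeHyperplane (G : SimpleGraph V) (e : V × V) : Set (V × V) :=
  {f | G.Adj f.1 f.2 ∧ Theta G e f}

variable {G : SimpleGraph V} {S T U : Set V} {u v w x y z a b p q r : V}

theorem IsIntervalConvex.inter (hS : IsIntervalConvex G S) (hT : IsIntervalConvex G T) :
    IsIntervalConvex G (S ∩ T) :=
  fun _ _ _ hu hw hz => ⟨hS hu.1 hw.1 hz, hT hu.2 hw.2 hz⟩

namespace SimpleGraph.Connected

theorem exists_adj_dist_add_one (hc : G.Connected) (hne : u ≠ z) :
    ∃ u₁, G.Adj u u₁ ∧ G.dist u₁ z + 1 = G.dist u z := by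
  obtain ⟨p, hp⟩ := hc.exists_walk_length_eq_dist u z
  cases p with
  | nil => exact absurd rfl hne
  | @cons _ u₁ _ h q =>
    refine ⟨u₁, h, le_antisymm ?_ ?_⟩
    · simpa [← hp] using dist_le q
    · have := hc.dist_triangle (u := u) (v := u₁) (w := z)
      rw [dist_eq_one_iff_adj.mpr h] at this
      omega

theorem isIntervalConvex_of_adj (hc : G.Connected)
    (hS : ∀ ⦃u w z⦄, u ∈ S → w ∈ S → G.Adj u z →
      G.dist u z + G.dist z w = G.dist u w → z ∈ S) :
    IsIntervalConvex G S := by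
  suffices ∀ n u w z, G.dist u z = n → u ∈ S → w ∈ S →
      G.dist u z + G.dist z w = G.dist u w → z ∈ S from
    fun u w z hu hw hz => this _ u w z rfl hu hw hz
  intro n
  induction n with
  | zero => intro u w z hn hu _ _; rwa [← hc.dist_eq_zero_iff.mp hn]
  | succ n ih =>
    intro u w z hn hu hw hz
    obtain ⟨u₁, hadj, hu₁⟩ := hc.exists_adj_dist_add_one (u := u) (z := z) (by
      rintro rfl; simp at hn)
    have h₁ := hc.dist_triangle (u := u₁) (v := z) (w := w)
    have h₂ := hc.dist_triangle (u := u) (v := u₁) (w := w)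
    have h₃ : G.dist u u₁ = 1 := dist_eq_one_iff_adj.mpr hadj
    have hu₁w : G.dist u u₁ + G.dist u₁ w = G.dist u w := by omega
    exact ih u₁ w z (by omega) (hS hu hw hadj hu₁w) hw (by omega)

theorem dist_eq_add_one_of_mem_halfspace (hc : G.Connected) (hxy : G.Adj x y)
    (hv : v ∈ halfspace G x y) : G.dist v y = G.dist v x + 1 := by
  have := hc.dist_triangle (u := v) (v := x) (w := y)
  rw [dist_eq_one_iff_adj.mpr hxy] at this
  exact le_antisymm this hv

theorem mem_halfspace_of_dist_add (hc : G.Connected) (hxy : G.Adj x y)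
    (hu : u ∈ halfspace G x y) (hz : G.dist u z + G.dist z x = G.dist u x) :
    z ∈ halfspace G x y := by
  have h₁ := hc.dist_eq_add_one_of_mem_halfspace hxy hu
  have h₂ := hc.dist_triangle (u := u) (v := z) (w := y)
  show G.dist z x < G.dist z y
  omega

end SimpleGraph.Connected

namespace IsMedianGraph

theorem dist_adj_cases (hm : IsMedianGraph G) (hxy : G.Adj x y) (v : V) :
    G.dist v y = G.dist v x + 1 ∨ G.dist v x = G.dist v y + 1 := by
  obtain ⟨m, ⟨h₁, h₂, h₃⟩, -⟩ := hm.2 x y v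
  rw [dist_eq_one_iff_adj.mpr hxy] at h₁
  rcases Nat.eq_zero_or_pos (G.dist x m) with h | h
  · obtain rfl := hm.1.dist_eq_zero_iff.mp h
    simp only [SimpleGraph.dist_comm] at *
    omega
  · obtain rfl : m = y := hm.1.dist_eq_zero_iff.mp (by omega)
    simp only [SimpleGraph.dist_comm] at *
    omega

theorem compl_halfspace (hm : IsMedianGraph G) (hxy : G.Adj x y) :
    (halfspace G x y)ᶜ = halfspace G y x := by
  ext v
  simp only [halfspace, Set.mem_compl_iff, Set.mem_ofPred_eq]
  rcases hm.dist_adj_cases hxy v with h | h <;> omega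

theorem notMem_halfspace_iff (hm : IsMedianGraph G) (hxy : G.Adj x y) :
    v ∉ halfspace G x y ↔ v ∈ halfspace G y x := by
  rw [← Set.mem_compl_iff, hm.compl_halfspace hxy]

/-- Otherwise the median of `r`, `q`, `x` would be a vertex of the halfspace closer to `p`
than `q`, with `r` on a geodesic to it. -/
theorem dist_add_dist_eq_of_isAdjConvexBelow (hm : IsMedianGraph G) (hxy : G.Adj x y)
    (hS : IsAdjConvexBelow G (halfspace G x y) (G.dist p q)) (hpr : G.Adj p r)
    (hp : p ∈ halfspace G x y) (hq : q ∈ halfspace G x y) (hr : r ∉ halfspace G x y)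
    (hrq : G.dist p r + G.dist r q = G.dist p q) :
    G.dist r q + G.dist q x = G.dist r x := by
  obtain ⟨m, ⟨h₁, h₂, h₃⟩, -⟩ := hm.2 r q x
  obtain rfl | hmq := eq_or_ne m q
  · exact h₂
  have hm_mem : m ∈ halfspace G x y := hm.1.mem_halfspace_of_dist_add hxy hq h₃
  have hpos : 0 < G.dist m q := Nat.pos_of_ne_zero (hm.1.dist_eq_zero_iff.not.mpr hmq)
  have t₁ := hm.1.dist_triangle (u := p) (v := r) (w := m)
  have t₂ := hm.1.dist_triangle (u := p) (v := m) (w := q)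
  exact absurd (hS (by omega) hp hm_mem hpr (by omega)) hr

/-- Otherwise `z` and the median `z'` of `u`, `w`, `x` would be two distinct medians of `u`, `w`
and the median of `z`, `z'`, `y`. -/
theorem mem_halfspace_of_dist_eq_two (hm : IsMedianGraph G) (hxy : G.Adj x y)
    (hu : u ∈ halfspace G x y) (hw : w ∈ halfspace G x y) (huz : G.Adj u z) (hzw : G.Adj z w)
    (huw : G.dist u w = 2) (hx : G.dist w x = G.dist u x) : z ∈ halfspace G x y := by
  by_contra hz
  have hc := hm.1
  have huy := hc.dist_eq_add_one_of_mem_halfspace hxy hu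
  have hwy := hc.dist_eq_add_one_of_mem_halfspace hxy hw
  have hzx := hc.dist_eq_add_one_of_mem_halfspace hxy.symm ((hm.notMem_halfspace_iff hxy).mp hz)
  have huz₁ := dist_eq_one_iff_adj.mpr huz
  have hzw₁ := dist_eq_one_iff_adj.mpr hzw
  have t₁ := hc.dist_triangle (u := z) (v := u) (w := y)
  have t₂ := hc.dist_triangle (u := u) (v := z) (w := x)
  obtain ⟨z', ⟨f₁, f₂, f₃⟩, -⟩ := hm.2 u w x
  have hz' : z' ∈ halfspace G x y := hc.mem_halfspace_of_dist_add hxy hu f₂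
  have hz'y := hc.dist_eq_add_one_of_mem_halfspace hxy hz'
  have t₃ := hc.dist_triangle (u := z) (v := z') (w := x)
  have t₄ := hc.dist_triangle (u := z) (v := u) (w := z')
  obtain ⟨y', ⟨g₁, g₂, g₃⟩, -⟩ := hm.2 z z' y
  have t₅ := hc.dist_triangle (u := u) (v := z) (w := y')
  have t₆ := hc.dist_triangle (u := u) (v := y') (w := y)
  have t₇ := hc.dist_triangle (u := w) (v := z) (w := y')
  have t₈ := hc.dist_triangle (u := w) (v := y') (w := y)
  have hne : z ≠ z' := by rintro rfl; exact hz hz'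
  refine hne ((hm.2 u w y').unique ?_ ?_)
  · simp only [SimpleGraph.dist_comm] at *; omega
  · simp only [SimpleGraph.dist_comm] at *; omega

/-- In a shortest counterexample, applying `dist_add_dist_eq_of_isAdjConvexBelow` once from `u`
and once from `w`, with the median `M` of `z`, `w`, `y` as the step leaving the halfspace at `w`,
forces `d(u, w) = 2`. -/
theorem isAdjConvexBelow_halfspace_succ (hm : IsMedianGraph G) (hxy : G.Adj x y) {n : ℕ}
    (hS : IsAdjConvexBelow G (halfspace G x y) n) :
    IsAdjConvexBelow G (halfspace G x y) (n + 1) := by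
  intro u w z hlt hu hw huz hzuw
  rcases Nat.lt_succ_iff_lt_or_eq.mp hlt with hlt | rfl
  · exact hS hlt hu hw huz hzuw
  by_contra hz
  have hc := hm.1
  have hz' : z ∈ halfspace G y x := (hm.notMem_halfspace_iff hxy).mp hz
  have E₁ := hm.dist_add_dist_eq_of_isAdjConvexBelow hxy hS huz hu hw hz hzuw
  obtain ⟨M, ⟨h₁, h₂, h₃⟩, -⟩ := hm.2 z w y
  have hM : M ∉ halfspace G x y :=
    (hm.notMem_halfspace_iff hxy).mpr (hc.mem_halfspace_of_dist_add hxy.symm hz' h₂)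
  have huy := hc.dist_eq_add_one_of_mem_halfspace hxy hu
  have hwy := hc.dist_eq_add_one_of_mem_halfspace hxy hw
  have hzx := hc.dist_eq_add_one_of_mem_halfspace hxy.symm hz'
  have hMx := hc.dist_eq_add_one_of_mem_halfspace hxy.symm
    ((hm.notMem_halfspace_iff hxy).mp hM)
  have huz₁ : G.dist u z = 1 := dist_eq_one_iff_adj.mpr huz
  have t₀ := hc.dist_triangle (u := z) (v := u) (w := x)
  have t₁ := hc.dist_triangle (u := u) (v := z) (w := y)
  have t₂ := hc.dist_triangle (u := u) (v := z) (w := M)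
  have t₃ := hc.dist_triangle (u := u) (v := M) (w := w)
  have hwM₁ : G.dist w M = 1 := by simp only [SimpleGraph.dist_comm] at *; omega
  have hwM : G.Adj w M := dist_eq_one_iff_adj.mp hwM₁
  have hMu : G.dist w M + G.dist M u = G.dist w u := by simp only [SimpleGraph.dist_comm] at *; omega
  have E₂ := hm.dist_add_dist_eq_of_isAdjConvexBelow hxy (dist_comm (G := G) ▸ hS) hwM hw hu
    hM hMu
  have huw : G.dist u w = 2 := by simp only [SimpleGraph.dist_comm] at *; omega
  have hzw : G.dist z w = 1 := by omega
  have hx : G.dist w x = G.dist u x := by simp only [SimpleGraph.dist_comm] at *; omega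
  exact hz (hm.mem_halfspace_of_dist_eq_two hxy hu hw huz (dist_eq_one_iff_adj.mp hzw) huw hx)

theorem isIntervalConvex_halfspace (hm : IsMedianGraph G) (hxy : G.Adj x y) :
    IsIntervalConvex G (halfspace G x y) := by
  have hS : ∀ n, IsAdjConvexBelow G (halfspace G x y) n := by
    intro n
    induction n with
    | zero => intro _ _ _ h; exact absurd h (Nat.not_lt_zero _)
    | succ n ih => exact hm.isAdjConvexBelow_halfspace_succ hxy ih
  exact hm.1.isIntervalConvex_of_adj fun u w z hu hw huz hz =>
    hS _ (Nat.lt_succ_self _) hu hw huz hz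

theorem dist_eq_add_one_of_adj_of_notMem (hm : IsMedianGraph G) (hxy : G.Adj x y)
    (hpq : G.Adj p q) (hp : p ∈ halfspace G x y) (hq : q ∉ halfspace G x y)
    (hv : v ∈ halfspace G x y) : G.dist v q = G.dist v p + 1 := by
  refine (hm.dist_adj_cases hpq v).resolve_right fun h => hq ?_
  have hqp : G.dist q p = 1 := dist_eq_one_iff_adj.mpr hpq.symm
  exact hm.isIntervalConvex_halfspace hxy hv hp (by omega)

theorem theta_iff (hm : IsMedianGraph G) (hxy : G.Adj x y) :
    Theta G (x, y) (a, b) ↔ (a ∈ halfspace G x y ↔ b ∉ halfspace G x y) := by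
  have ha := hm.dist_adj_cases hxy a
  have hb := hm.dist_adj_cases hxy b
  simp only [Theta, halfspace, Set.mem_ofPred_eq]
  simp only [SimpleGraph.dist_comm] at *
  omega

theorem mem_edgeHyperplane_iff (hm : IsMedianGraph G) (hxy : G.Adj x y) :
    (p, q) ∈ edgeHyperplane G (x, y) ↔
      G.Adj p q ∧ (p ∈ halfspace G x y ↔ q ∉ halfspace G x y) :=
  ⟨fun h => ⟨h.1, (hm.theta_iff hxy).mp h.2⟩,
    fun h => ⟨h.1, (hm.theta_iff hxy).mpr h.2⟩⟩

theorem edgeHyperplane_swap (hm : IsMedianGraph G) (hxy : G.Adj x y) :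
    edgeHyperplane G (y, x) = edgeHyperplane G (x, y) := by
  ext ⟨p, q⟩
  rw [hm.mem_edgeHyperplane_iff hxy, hm.mem_edgeHyperplane_iff hxy.symm,
    ← hm.compl_halfspace hxy]
  simp only [Set.mem_compl_iff]
  tauto

theorem edgeHyperplane_eq_of_halfspace_eq (hm : IsMedianGraph G) (hab : G.Adj a b)
    (hxy : G.Adj x y) (h : halfspace G a b = halfspace G x y) :
    edgeHyperplane G (a, b) = edgeHyperplane G (x, y) := by
  ext ⟨p, q⟩
  rw [hm.mem_edgeHyperplane_iff hab, hm.mem_edgeHyperplane_iff hxy, h]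

theorem halfspace_subset_of_adj (hm : IsMedianGraph G) (hxy : G.Adj x y) (hab : G.Adj a b)
    (ha : a ∈ halfspace G x y) (hb : b ∉ halfspace G x y) :
    halfspace G x y ⊆ halfspace G a b := by
  intro v hv
  by_contra hva
  have hvb := hm.1.dist_eq_add_one_of_mem_halfspace hab.symm
    ((hm.notMem_halfspace_iff hab).mp hva)
  have hba : G.dist b a = 1 := dist_eq_one_iff_adj.mpr hab.symm
  exact hb (hm.isIntervalConvex_halfspace hxy hv ha (by omega))

theorem halfspace_eq_of_adj (hm : IsMedianGraph G) (hxy : G.Adj x y) (hab : G.Adj a b)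
    (ha : a ∈ halfspace G x y) (hb : b ∉ halfspace G x y) :
    halfspace G a b = halfspace G x y := by
  refine (hm.halfspace_subset_of_adj hxy hab ha hb).antisymm' ?_
  have h := hm.halfspace_subset_of_adj hxy.symm hab.symm
    ((hm.notMem_halfspace_iff hxy).mp hb) (by rwa [← hm.notMem_halfspace_iff hxy, not_not])
  rwa [← hm.compl_halfspace hxy, ← hm.compl_halfspace hab, Set.compl_subset_compl] at h

theorem edgeHyperplane_eq_of_mem (hm : IsMedianGraph G) (hxy : G.Adj x y)
    (hf : (a, b) ∈ edgeHyperplane G (x, y)) :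
    edgeHyperplane G (a, b) = edgeHyperplane G (x, y) := by
  obtain ⟨hab, hiff⟩ := (hm.mem_edgeHyperplane_iff hxy).mp hf
  by_cases ha : a ∈ halfspace G x y
  · exact hm.edgeHyperplane_eq_of_halfspace_eq hab hxy
      (hm.halfspace_eq_of_adj hxy hab ha (hiff.mp ha))
  · have hb : b ∈ halfspace G x y := by tauto
    rw [← hm.edgeHyperplane_swap hab]
    exact hm.edgeHyperplane_eq_of_halfspace_eq hab.symm hxy
      (hm.halfspace_eq_of_adj hxy hab.symm hb ha)

end IsMedianGraph

theorem mem_edgeHyperplane_self (hxy : G.Adj x y) : (x, y) ∈ edgeHyperplane G (x, y) :=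
  ⟨hxy, by simp [Theta, dist_eq_one_iff_adj.mpr hxy, dist_eq_one_iff_adj.mpr hxy.symm]⟩

theorem isHyperplane_edgeHyperplane (hxy : G.Adj x y) : IsHyperplane G (edgeHyperplane G (x, y)) :=
  ⟨(x, y), hxy, rfl⟩

namespace IsHyperplane

variable {h h' : Set (V × V)} {f : V × V}

theorem eq_edgeHyperplane (hm : IsMedianGraph G) (hh : IsHyperplane G h) (hf : f ∈ h) :
    h = edgeHyperplane G f := by
  obtain ⟨⟨x, y⟩, hxy, rfl⟩ := hh
  exact (hm.edgeHyperplane_eq_of_mem hxy hf).symm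

theorem eq_of_mem (hm : IsMedianGraph G) (hh : IsHyperplane G h) (hh' : IsHyperplane G h')
    (hf : f ∈ h) (hf' : f ∈ h') : h = h' :=
  (hh.eq_edgeHyperplane hm hf).trans (hh'.eq_edgeHyperplane hm hf').symm

theorem swap_mem (hm : IsMedianGraph G) (hh : IsHyperplane G h) (hpq : (p, q) ∈ h) :
    (q, p) ∈ h := by
  obtain ⟨⟨x, y⟩, hxy, rfl⟩ := hh
  obtain ⟨hpq, hiff⟩ := (hm.mem_edgeHyperplane_iff hxy).mp hpq
  exact (hm.mem_edgeHyperplane_iff hxy).mpr ⟨hpq.symm, by tauto⟩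

theorem adjTo_iff (hm : IsMedianGraph G) (hh : IsHyperplane G h) :
    AdjTo G h v ↔ ∃ u, (v, u) ∈ h := by
  constructor
  · rintro ⟨⟨p, q⟩, hpq, rfl | rfl⟩
    · exact ⟨q, hpq⟩
    · exact ⟨p, hh.swap_mem hm hpq⟩
  · rintro ⟨u, hu⟩
    exact ⟨(v, u), hu, Or.inl rfl⟩

end IsHyperplane

namespace IsMedianGraph

/-- The neighbour of `z` across the hyperplane is the median of `z`, `u'` and `w'`. -/
theorem exists_mem_edgeHyperplane_of_dist_add_of_mem_of_mem (hm : IsMedianGraph G)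
    (hxy : G.Adj x y) {u' w' : V} (hu : (u, u') ∈ edgeHyperplane G (x, y))
    (hw : (w, w') ∈ edgeHyperplane G (x, y)) (hu₀ : u ∈ halfspace G x y)
    (hw₀ : w ∈ halfspace G x y) (hz : G.dist u z + G.dist z w = G.dist u w) :
    ∃ m, (z, m) ∈ edgeHyperplane G (x, y) := by
  rw [hm.mem_edgeHyperplane_iff hxy] at hu hw
  have hu'₀ : u' ∉ halfspace G x y := hu.2.mp hu₀
  have hw'₀ : w' ∉ halfspace G x y := hw.2.mp hw₀
  have hz₀ : z ∈ halfspace G x y := hm.isIntervalConvex_halfspace hxy hu₀ hw₀ hz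
  have e₁ := hm.dist_eq_add_one_of_adj_of_notMem hxy hu.1 hu₀ hu'₀ hz₀
  have e₂ := hm.dist_eq_add_one_of_adj_of_notMem hxy hw.1 hw₀ hw'₀ hz₀
  have e₃ := hm.dist_eq_add_one_of_adj_of_notMem hxy hw.1 hw₀ hw'₀ hu₀
  have e₄ := hm.dist_eq_add_one_of_adj_of_notMem hxy hu.1 hu₀ hu'₀ hw₀
  rw [hm.notMem_halfspace_iff hxy] at hu'₀ hw'₀
  have e₅ := hm.dist_eq_add_one_of_adj_of_notMem hxy.symm hw.1.symm hw'₀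
    ((hm.notMem_halfspace_iff hxy.symm).mpr hw₀) hu'₀
  obtain ⟨m, ⟨h₁, h₂, h₃⟩, -⟩ := hm.2 z u' w'
  have hm₀ : m ∈ halfspace G y x := hm.isIntervalConvex_halfspace hxy.symm hu'₀ hw'₀ h₃
  have hzm : G.dist z m = 1 := by simp only [SimpleGraph.dist_comm] at *; omega
  exact ⟨m, (hm.mem_edgeHyperplane_iff hxy).mpr ⟨dist_eq_one_iff_adj.mp hzm,
    iff_of_true hz₀ ((hm.notMem_halfspace_iff hxy).mpr hm₀)⟩⟩

theorem exists_mem_edgeHyperplane_of_dist_add (hm : IsMedianGraph G) (hxy : G.Adj x y)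
    {u' w' : V} (hu : (u, u') ∈ edgeHyperplane G (x, y))
    (hw : (w, w') ∈ edgeHyperplane G (x, y)) (hz₀ : z ∈ halfspace G x y)
    (hz : G.dist u z + G.dist z w = G.dist u w) :
    ∃ m, (z, m) ∈ edgeHyperplane G (x, y) := by
  wlog hu₀ : u ∈ halfspace G x y generalizing u w u' w'
  · by_cases hw₀ : w ∈ halfspace G x y
    · exact this hw hu (by simp only [SimpleGraph.dist_comm] at *; omega) hw₀
    rw [hm.notMem_halfspace_iff hxy] at hu₀ hw₀
    exact absurd (hm.isIntervalConvex_halfspace hxy.symm hu₀ hw₀ hz)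
      ((hm.notMem_halfspace_iff hxy.symm).mpr hz₀)
  by_cases hw₀ : w ∈ halfspace G x y
  · exact hm.exists_mem_edgeHyperplane_of_dist_add_of_mem_of_mem hxy hu hw hu₀ hw₀ hz
  obtain ⟨hww', hiff⟩ := (hm.mem_edgeHyperplane_iff hxy).mp hw
  have hw'₀ : w' ∈ halfspace G x y := by tauto
  have e₁ := hm.dist_eq_add_one_of_adj_of_notMem hxy hww'.symm hw'₀ hw₀ hz₀
  have e₂ := hm.dist_eq_add_one_of_adj_of_notMem hxy hww'.symm hw'₀ hw₀ hu₀
  exact hm.exists_mem_edgeHyperplane_of_dist_add_of_mem_of_mem hxy hu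
    ((isHyperplane_edgeHyperplane hxy).swap_mem hm hw) hu₀ hw'₀ (by omega)

/-- The partners `u`, `u₁` of the adjacent vertices `v`, `v₁` are adjacent: otherwise `v` would
lie between `u` and `u₁`, on the other side. -/
theorem adj_of_mem_edgeHyperplane (hm : IsMedianGraph G) (hab : G.Adj a b) {v₁ u₁ : V}
    (hvv₁ : G.Adj v v₁) (hva : v ∈ halfspace G a b) (hv₁a : v₁ ∈ halfspace G a b)
    (hu : (v, u) ∈ edgeHyperplane G (a, b)) (hu₁ : (v₁, u₁) ∈ edgeHyperplane G (a, b)) :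
    G.Adj u u₁ := by
  obtain ⟨hvu, hua⟩ := (hm.mem_edgeHyperplane_iff hab).mp hu
  obtain ⟨hv₁u₁, hu₁a⟩ := (hm.mem_edgeHyperplane_iff hab).mp hu₁
  have e₁ := hm.dist_eq_add_one_of_adj_of_notMem hab hv₁u₁ hv₁a (hu₁a.mp hv₁a) hva
  have e₂ : G.dist v v₁ = 1 := dist_eq_one_iff_adj.mpr hvv₁
  have e₃ : G.dist u v = 1 := dist_eq_one_iff_adj.mpr hvu.symm
  refine dist_eq_one_iff_adj.mp ?_
  rcases hm.dist_adj_cases hvu u₁ with h | h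
  · rw [hm.notMem_halfspace_iff hab] at hua hu₁a
    have := hm.isIntervalConvex_halfspace hab.symm (hua.mp hva) (hu₁a.mp hv₁a)
      (u := u) (w := u₁) (z := v) (by simp only [SimpleGraph.dist_comm] at *; omega)
    exact absurd this ((hm.notMem_halfspace_iff hab.symm).mpr hva)
  · simp only [SimpleGraph.dist_comm] at *; omega

theorem mem_edgeHyperplane_of_adj_of_adj (hm : IsMedianGraph G) {v₁ u₁ : V}
    (hvv₁ : G.Adj v v₁) (huu₁ : G.Adj u u₁) (hvu : G.Adj v u) (hv₁u₁ : G.Adj v₁ u₁)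
    (hu : (v, u) ∉ edgeHyperplane G (v, v₁)) (hu₁ : (v₁, u₁) ∉ edgeHyperplane G (v, v₁)) :
    (u, u₁) ∈ edgeHyperplane G (v, v₁) := by
  have hv : v ∈ halfspace G v v₁ := by simp [halfspace, dist_eq_one_iff_adj.mpr hvv₁]
  have hv₁ : v₁ ∉ halfspace G v v₁ := by simp [halfspace, dist_eq_one_iff_adj.mpr hvv₁.symm]
  simp only [hm.mem_edgeHyperplane_iff hvv₁, hvu, hv₁u₁, huu₁, true_and] at hu hu₁ ⊢
  tauto

end IsMedianGraph

namespace IsHyperplane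

variable {h h' : Set (V × V)}

theorem adj_of_mem (hh : IsHyperplane G h) (hpq : (p, q) ∈ h) : G.Adj p q := by
  obtain ⟨e, -, rfl⟩ := hh
  exact hpq.1

theorem isIntervalConvex_carrier (hm : IsMedianGraph G) (hh : IsHyperplane G h) :
    IsIntervalConvex G {v | AdjTo G h v} := by
  obtain ⟨⟨x, y⟩, hxy, rfl⟩ := hh
  have H := isHyperplane_edgeHyperplane hxy
  intro u w z hu hw hz
  obtain ⟨u', hu⟩ := (H.adjTo_iff hm).mp hu
  obtain ⟨w', hw⟩ := (H.adjTo_iff hm).mp hw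
  refine (H.adjTo_iff hm).mpr ?_
  by_cases hz₀ : z ∈ halfspace G x y
  · exact hm.exists_mem_edgeHyperplane_of_dist_add hxy hu hw hz₀ hz
  · rw [← hm.edgeHyperplane_swap hxy] at hu hw ⊢
    exact hm.exists_mem_edgeHyperplane_of_dist_add hxy.symm hu hw
      ((hm.notMem_halfspace_iff hxy).mp hz₀) hz

theorem transverse_edgeHyperplane_of_mem_of_adjTo (hm : IsMedianGraph G)
    (hh : IsHyperplane G h) (hab : G.Adj a b) (hne : h ≠ edgeHyperplane G (a, b)) {v v₁ : V}
    (hv : (v, v₁) ∈ h) (hva : v ∈ halfspace G a b)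
    (hv' : AdjTo G (edgeHyperplane G (a, b)) v) (hv₁' : AdjTo G (edgeHyperplane G (a, b)) v₁) :
    Transverse G h (edgeHyperplane G (a, b)) := by
  have H' := isHyperplane_edgeHyperplane hab
  have hvv₁ := hh.adj_of_mem hv
  obtain ⟨u, hu⟩ := (H'.adjTo_iff hm).mp hv'
  obtain ⟨u₁, hu₁⟩ := (H'.adjTo_iff hm).mp hv₁'
  have hnot : ∀ {e}, e ∈ h → e ∉ edgeHyperplane G (a, b) := fun he he' =>
    hne (hh.eq_of_mem hm H' he he')
  have hv₁a : v₁ ∈ halfspace G a b := by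
    by_contra hv₁a
    exact hnot hv ((hm.mem_edgeHyperplane_iff hab).mpr ⟨hvv₁, iff_of_true hva hv₁a⟩)
  have huu₁ := hm.adj_of_mem_edgeHyperplane hab hvv₁ hva hv₁a hu hu₁
  have hvu := H'.adj_of_mem hu
  have hv₁u₁ := H'.adj_of_mem hu₁
  rw [hh.eq_edgeHyperplane hm hv] at hnot ⊢
  exact ⟨v, v₁, u, u₁, mem_edgeHyperplane_self hvv₁,
    hm.mem_edgeHyperplane_of_adj_of_adj hvv₁ huu₁ hvu hv₁u₁ (fun he => hnot he hu)
      (fun he => hnot he hu₁), hu, hu₁, hvv₁, huu₁, hvu, hv₁u₁⟩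

theorem transverse_of_mem_of_adjTo (hm : IsMedianGraph G) (hh : IsHyperplane G h)
    (hh' : IsHyperplane G h') (hne : h ≠ h') {v v₁ : V} (hv : (v, v₁) ∈ h)
    (hv' : AdjTo G h' v) (hv₁' : AdjTo G h' v₁) : Transverse G h h' := by
  obtain ⟨⟨a, b⟩, hab, hh'⟩ := hh'
  replace hab : G.Adj a b := hab
  replace hh' : h' = edgeHyperplane G (a, b) := hh'
  subst hh'
  by_cases hva : v ∈ halfspace G a b
  · exact hh.transverse_edgeHyperplane_of_mem_of_adjTo hm hab hne hv hva hv' hv₁'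
  · rw [← hm.edgeHyperplane_swap hab] at hne hv' hv₁' ⊢
    exact hh.transverse_edgeHyperplane_of_mem_of_adjTo hm hab.symm hne hv
      ((hm.notMem_halfspace_iff hab).mp hva) hv' hv₁'

end IsHyperplane

theorem IsHyperplane.exists_adjTo {h : Set (V × V)} (hh : IsHyperplane G h) :
    ∃ v, AdjTo G h v := by
  obtain ⟨⟨x, y⟩, hxy, rfl⟩ := hh
  exact ⟨x, (x, y), mem_edgeHyperplane_self hxy, Or.inl rfl⟩

namespace IsMedianGraph

theorem inter_nonempty_of_pairwise (hm : IsMedianGraph G) (hS : IsIntervalConvex G S)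
    (hT : IsIntervalConvex G T) (hU : IsIntervalConvex G U) (hST : (S ∩ T).Nonempty)
    (hTU : (T ∩ U).Nonempty) (hSU : (S ∩ U).Nonempty) : (S ∩ T ∩ U).Nonempty := by
  obtain ⟨p, hpS, hpT⟩ := hST
  obtain ⟨q, hqT, hqU⟩ := hTU
  obtain ⟨r, hrS, hrU⟩ := hSU
  obtain ⟨m, ⟨h₁, h₂, h₃⟩, -⟩ := hm.2 p q r
  exact ⟨m, ⟨hS hpS hrS h₂, hT hpT hqT h₁⟩, hU hqU hrU h₃⟩

theorem exists_forall_mem_of_pairwise (hm : IsMedianGraph G) (F : Finset (Set V))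
    (hconv : ∀ S ∈ F, IsIntervalConvex G S) (hpair : ∀ S ∈ F, ∀ T ∈ F, (S ∩ T).Nonempty) :
    ∃ v, ∀ S ∈ F, v ∈ S := by
  induction hn : F.card using Nat.strong_induction_on generalizing F with
  | _ n ih =>
    obtain rfl | ⟨S, hS⟩ := F.eq_empty_or_nonempty
    · obtain ⟨v⟩ := hm.1.nonempty
      exact ⟨v, by simp⟩
    have hF : ∀ U ∈ F, U = S ∨ U ∈ F.erase S := fun U hU => by
      rw [Finset.mem_erase]; tauto
    rcases (F.erase S).eq_empty_or_nonempty with hF' | ⟨T, hT⟩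
    · obtain ⟨v, hv, -⟩ := hpair S hS S hS
      refine ⟨v, fun U hU => ?_⟩
      rcases hF U hU with rfl | hU'
      · exact hv
      · simp [hF'] at hU'
    have hmem : ∀ {U}, U ∈ F.erase S → U ∈ F := fun hU => Finset.mem_of_mem_erase hU
    obtain ⟨v, hv⟩ := ih _
      (by rw [← hn]; exact Finset.card_image_le.trans_lt (Finset.card_erase_lt_of_mem hS))
      ((F.erase S).image (S ∩ ·))
      (by
        simp only [Finset.mem_image]
        rintro _ ⟨U, hU, rfl⟩
        exact (hconv S hS).inter (hconv U (hmem hU)))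
      (by
        simp only [Finset.mem_image]
        rintro _ ⟨U, hU, rfl⟩ _ ⟨U', hU', rfl⟩
        obtain ⟨m, ⟨hmS, hmU⟩, hmU'⟩ := hm.inter_nonempty_of_pairwise (hconv S hS)
          (hconv U (hmem hU)) (hconv U' (hmem hU')) (hpair S hS U (hmem hU))
          (hpair U (hmem hU) U' (hmem hU')) (hpair S hS U' (hmem hU'))
        exact ⟨m, ⟨hmS, hmU⟩, hmS, hmU'⟩)
      rfl
    have hvS : v ∈ S := (hv _ (Finset.mem_image_of_mem _ hT)).1
    refine ⟨v, fun U hU => ?_⟩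
    rcases hF U hU with rfl | hU'
    · exact hvS
    · exact (hv _ (Finset.mem_image_of_mem _ hU')).2

theorem Wv_subset_image_neighborSet (hm : IsMedianGraph G) (v : V) :
    Wv G v ⊆ (fun u => edgeHyperplane G (v, u)) '' G.neighborSet v := by
  rintro h ⟨hh, hv⟩
  obtain ⟨u, hu⟩ := (hh.adjTo_iff hm).mp hv
  exact ⟨u, hh.adj_of_mem hu, (hh.eq_edgeHyperplane hm hu).symm⟩

theorem eq_of_Wv_subset (hm : IsMedianGraph G) (hext : ∀ v : V, ¬ LinkIsCone G v)
    (hsub : Wv G v ⊆ Wv G w) : v = w := by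
  by_contra hne
  obtain ⟨v₁, hvv₁, hd⟩ := hm.1.exists_adj_dist_add_one hne
  have H := isHyperplane_edgeHyperplane hvv₁
  have hmem := mem_edgeHyperplane_self hvv₁
  refine hext v ⟨_, ⟨H, (H.adjTo_iff hm).mpr ⟨v₁, hmem⟩⟩, fun h' hh' hne' => ?_⟩
  have hv₁ : AdjTo G h' v₁ := hh'.1.isIntervalConvex_carrier hm hh'.2 (hsub hh').2
    (by rw [dist_eq_one_iff_adj.mpr hvv₁]; omega)
  exact H.transverse_of_mem_of_adjTo hm hh'.1 (Ne.symm hne') hmem hh'.2 hv₁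

end IsMedianGraph

theorem isContactClique_Wv (v : V) : IsContactClique G (Wv G v) :=
  ⟨fun _ hh => hh.1, fun _ hh _ hh' _ => ⟨v, hh.2, hh'.2⟩⟩

namespace IsContactClique

variable {C D : Set (Set (V × V))}

theorem exists_subset_Wv_of_finite (hm : IsMedianGraph G) (hC : IsContactClique G C)
    (hDC : D ⊆ C) (hD : D.Finite) : ∃ v, D ⊆ Wv G v := by
  classical
  obtain ⟨v, hv⟩ := hm.exists_forall_mem_of_pairwise (hD.toFinset.image fun h => {v | AdjTo G h v})
    (by
      simp only [Finset.mem_image, Set.Finite.mem_toFinset]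
      rintro _ ⟨h, hh, rfl⟩
      exact (hC.1 h (hDC hh)).isIntervalConvex_carrier hm)
    (by
      simp only [Finset.mem_image, Set.Finite.mem_toFinset]
      rintro _ ⟨h, hh, rfl⟩ _ ⟨h', hh', rfl⟩
      obtain rfl | hne := eq_or_ne h h'
      · obtain ⟨v, hv⟩ := (hC.1 h (hDC hh)).exists_adjTo
        exact ⟨v, hv, hv⟩
      · obtain ⟨v, hv, hv'⟩ := hC.2 h (hDC hh) h' (hDC hh') hne
        exact ⟨v, hv, hv'⟩)
  exact ⟨v, fun h hh => ⟨hC.1 h (hDC hh),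
    hv _ (Finset.mem_image_of_mem _ (hD.mem_toFinset.mpr hh))⟩⟩

theorem finite (hm : IsMedianGraph G) (hULF : UnifLocFinite G) (hC : IsContactClique G C) :
    C.Finite := by
  obtain ⟨N, hN⟩ := hULF
  by_contra hinf
  obtain ⟨D, hDC, hD, hDcard⟩ := Set.Infinite.exists_subset_ncard_eq hinf (N + 1)
  obtain ⟨v, hv⟩ := hC.exists_subset_Wv_of_finite hm hDC hD
  have himage := ((hN v).1.image fun u => edgeHyperplane G (v, u))
  have : N + 1 ≤ N := calc
    N + 1 = D.ncard := hDcard.symm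
    _ ≤ ((fun u => edgeHyperplane G (v, u)) '' G.neighborSet v).ncard :=
      Set.ncard_le_ncard (hv.trans (hm.Wv_subset_image_neighborSet v)) himage
    _ ≤ (G.neighborSet v).ncard := Set.ncard_image_le (hN v).1
    _ ≤ N := (hN v).2
  omega

theorem exists_subset_Wv (hm : IsMedianGraph G) (hULF : UnifLocFinite G)
    (hC : IsContactClique G C) : ∃ v, C ⊆ Wv G v :=
  hC.exists_subset_Wv_of_finite hm subset_rfl (hC.finite hm hULF)

end IsContactClique

/-- for a uniformly locally finite CAT(0) cube complex with no extremal
vertices, `v ↦ Wv G v` is a bijection between vertices and maximal cliques of the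
contact graph. -/
theorem vertices_biject_max_cliques (G : SimpleGraph V) (hG : IsMedianGraph G)
    (hULF : UnifLocFinite G) (hext : ∀ v : V, ¬ LinkIsCone G v) :
    (∀ v w : V, Wv G v = Wv G w → v = w) ∧
    (∀ C : Set (Set (V × V)), IsMaxContactClique G C ↔ ∃ v : V, C = Wv G v) := by
  refine ⟨fun v w h => hG.eq_of_Wv_subset hext h.subset, fun C => ⟨?_, ?_⟩⟩
  · rintro ⟨hC, hmax⟩
    obtain ⟨v, hv⟩ := hC.exists_subset_Wv hG hULF
    exact ⟨v, (hmax _ (isContactClique_Wv v) hv).symm⟩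
  · rintro ⟨v, rfl⟩
    refine ⟨isContactClique_Wv v, fun C' hC' hsub => ?_⟩
    obtain ⟨w, hw⟩ := hC'.exists_subset_Wv hG hULF
    obtain rfl := hG.eq_of_Wv_subset hext (hsub.trans hw)
    exact hw.antisymm hsub
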